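/- arXiv:1809.06699 — 3 statements merged into one kernel-verified Lean document; each statement's English description precedes it below -/
import Mathlib

section
/- Let a point P be uniformly distributed on the annular region S₁ \ S₂, where S₁ is a disk of radius R₁ centered at the origin and S₂ is a disk of radius R₂ centered at a point C with |C| = d, R₂ + d < R₁ (S₂ ⊂ S₁). Let r_T = |P − C| be the distance from P to C. Then r_T has density f(r) = 2r/(R₁² − R₂²) for R₂ ≤ r ≤ R₁ − d, and f(r) = (2r/(π(R₁² − R₂²))) · arccos((d² + r² − R₁²)/(2dr)) for R₁ − d < r ≤ R₁ + d. -/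
/-!
Translating `C` to the origin and passing to polar coordinates `(r, θ)`, the law of `|P − C|` has
density `r · |{θ ∈ (−π, π) : C + r(cos θ, sin θ) ∈ S₁ \ S₂}|` divided by the area of `S₁ \ S₂`.
For `r > R₂` that point lies in `S₁` iff `d² + r² + 2dr cos θ ≤ R₁²`, i.e. `cos θ ≤ −s` with
`s = (d² + r² − R₁²)/(2dr)`, a set of angles of measure `2 arccos s`. For `r ≤ R₁ − d` we have
`s ≤ −1`: the whole circle lies in `S₁`.
-/

open MeasureTheory Real Set

theorem cos_le_iff_arccos_le_abs {θ t : ℝ} (hθ : θ ∈ Ioo (-π) π) :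
    cos θ ≤ t ↔ arccos t ≤ |θ| := by
  have hθπ : |θ| ∈ Icc 0 π := ⟨abs_nonneg θ, (abs_lt.2 hθ).le⟩
  rw [← cos_abs]
  rcases lt_or_ge t (-1) with ht | ht
  · simp only [arccos_of_le_neg_one ht.le]
    constructor <;> intro h
    · linarith [neg_one_le_cos |θ|]
    · linarith [abs_lt.2 hθ]
  rcases lt_or_ge 1 t with ht' | ht'
  · simp only [arccos_of_one_le ht'.le, hθπ.1, iff_true]
    linarith [cos_le_one |θ|]
  conv_lhs => rw [← cos_arccos ht ht']
  exact strictAntiOn_cos.le_iff_ge hθπ ⟨arccos_nonneg t, arccos_le_pi t⟩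

theorem volume_sep_cos_le (t : ℝ) :
    volume {θ ∈ Ioo (-π) π | cos θ ≤ t} = ENNReal.ofReal (2 * arccos (-t)) := by
  have hset : {θ ∈ Ioo (-π) π | cos θ ≤ t} = Ioo (-π) π \ Ioo (-arccos t) (arccos t) := by
    ext θ
    simp only [mem_ofPred_eq, mem_sdiff, and_congr_right_iff]
    intro hθ
    rw [cos_le_iff_arccos_le_abs hθ, ← not_lt, abs_lt, mem_Ioo]
  rw [hset, measure_sdiff (Ioo_subset_Ioo (neg_le_neg (arccos_le_pi t)) (arccos_le_pi t))
    measurableSet_Ioo.nullMeasurableSet (by simp [Real.volume_Ioo]),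
    Real.volume_Ioo, Real.volume_Ioo, ← ENNReal.ofReal_sub _ (by linarith [arccos_nonneg t]),
    arccos_neg]
  ring_nf

theorem volume_disk (c : ℝ × ℝ) (R : ℝ) :
    volume {x : ℝ × ℝ | (x.1 - c.1) ^ 2 + (x.2 - c.2) ^ 2 ≤ R ^ 2} =
      ENNReal.ofReal (π * R ^ 2) := by
  have hball : Complex.measurableEquivRealProd ⁻¹'
      {x : ℝ × ℝ | (x.1 - c.1) ^ 2 + (x.2 - c.2) ^ 2 ≤ R ^ 2} =
        Metric.closedBall (Complex.equivRealProd.symm c) |R| := by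
    ext z
    simp only [mem_preimage, mem_ofPred_eq, Metric.mem_closedBall, Complex.dist_eq,
      ← sq_le_sq₀ (norm_nonneg _) (abs_nonneg R), sq_abs, Complex.sq_norm, Complex.normSq_apply]
    simp [Complex.measurableEquivRealProd, sq]
  rw [← Complex.volume_preserving_equiv_real_prod.measure_preimage
      (measurableSet_le (by fun_prop) measurable_const).nullMeasurableSet,
    hball, Complex.volume_closedBall, ← ENNReal.ofReal_pow (abs_nonneg R), sq_abs,
    ← ENNReal.ofReal_coe_nnreal, NNReal.coe_real_pi, mul_comm, ENNReal.ofReal_mul pi_pos.le]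

def angularSlice (c : ℝ × ℝ) (E : Set (ℝ × ℝ)) (r : ℝ) : Set ℝ :=
  {θ ∈ Ioo (-π) π | c + polarCoord.symm (r, θ) ∈ E}

theorem sqrt_polarCoord_symm {r : ℝ} (hr : 0 ≤ r) (θ : ℝ) :
    √((polarCoord.symm (r, θ)).1 ^ 2 + (polarCoord.symm (r, θ)).2 ^ 2) = r := by
  rw [polarCoord_symm_apply, mul_pow, mul_pow, ← mul_add, cos_sq_add_sin_sq, mul_one, sqrt_sq hr]

theorem setLIntegral_Ioo_indicator_polarCoord_symm (c : ℝ × ℝ) {E : Set (ℝ × ℝ)}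
    (hE : MeasurableSet E) (s : Set ℝ) {r : ℝ} (hr : 0 < r) :
    ∫⁻ θ in Ioo (-π) π, ENNReal.ofReal r •
        {x : ℝ × ℝ | √(x.1 ^ 2 + x.2 ^ 2) ∈ s ∧ c + x ∈ E}.indicator (1 : ℝ × ℝ → ENNReal)
          (polarCoord.symm (r, θ)) =
      s.indicator (fun r => ENNReal.ofReal r * volume (angularSlice c E r)) r := by
  classical
  set F : Set (ℝ × ℝ) := {x | √(x.1 ^ 2 + x.2 ^ 2) ∈ s ∧ c + x ∈ E}
  have hslice : MeasurableSet {θ | c + polarCoord.symm (r, θ) ∈ E} := hE.preimage (by fun_prop)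
  have hmem (θ : ℝ) : polarCoord.symm (r, θ) ∈ F ↔ r ∈ s ∧ c + polarCoord.symm (r, θ) ∈ E := by
    rw [mem_ofPred_eq, sqrt_polarCoord_symm hr.le]
  by_cases hrs : r ∈ s
  · have hind (θ : ℝ) : F.indicator (1 : ℝ × ℝ → ENNReal) (polarCoord.symm (r, θ)) =
        {θ | c + polarCoord.symm (r, θ) ∈ E}.indicator 1 θ := by
      simp only [indicator_apply, hmem, hrs, true_and, mem_ofPred_eq, Pi.one_apply]
    simp_rw [hind, smul_eq_mul]
    rw [lintegral_const_mul' _ _ ENNReal.ofReal_ne_top, lintegral_indicator_one hslice,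
      Measure.restrict_apply hslice, indicator_of_mem hrs, inter_comm]
    rfl
  · simp only [indicator_apply, hmem, hrs, false_and, if_false, smul_zero, lintegral_zero]

theorem map_restrict_euclideanDist_eq_withDensity (c : ℝ × ℝ) {E : Set (ℝ × ℝ)}
    (hE : MeasurableSet E) :
    (volume.restrict E).map (fun x => √((x.1 - c.1) ^ 2 + (x.2 - c.2) ^ 2)) =
      volume.withDensity ((Ioi 0).indicator fun r =>
        ENNReal.ofReal r * volume (angularSlice c E r)) := by
  ext s hs
  set F : Set (ℝ × ℝ) := {x | √(x.1 ^ 2 + x.2 ^ 2) ∈ s ∧ c + x ∈ E}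
  have hdist : Measurable fun x : ℝ × ℝ => √((x.1 - c.1) ^ 2 + (x.2 - c.2) ^ 2) := by fun_prop
  have hF : MeasurableSet F :=
    ((by fun_prop : Measurable fun x : ℝ × ℝ => √(x.1 ^ 2 + x.2 ^ 2)) hs).inter
      (hE.preimage (measurable_const_add c))
  have hmeas : Measurable fun p : ℝ × ℝ =>
      ENNReal.ofReal p.1 • F.indicator (1 : ℝ × ℝ → ENNReal) (polarCoord.symm p) :=
    measurable_fst.ennreal_ofReal.mul
      ((measurable_one.indicator hF).comp continuous_polarCoord_symm.measurable)
  calc (volume.restrict E).map (fun x => √((x.1 - c.1) ^ 2 + (x.2 - c.2) ^ 2)) s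
      = volume F := by
        rw [Measure.map_apply hdist hs, Measure.restrict_apply (hdist hs),
          ← (measurePreserving_add_left volume c).measure_preimage
            ((hdist hs).inter hE).nullMeasurableSet]
        congr 1
        ext x
        simp [F]
    _ = ∫⁻ r in Ioi 0, ∫⁻ θ in Ioo (-π) π,
          ENNReal.ofReal r • F.indicator (1 : ℝ × ℝ → ENNReal) (polarCoord.symm (r, θ)) := by
        rw [← lintegral_indicator_one hF, ← lintegral_comp_polarCoord_symm, polarCoord_target,
          Measure.volume_eq_prod, ← Measure.prod_restrict, lintegral_prod _ hmeas.aemeasurable]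
    _ = ∫⁻ r in Ioi 0, s.indicator (fun r => ENNReal.ofReal r * volume (angularSlice c E r)) r :=
        setLIntegral_congr_fun measurableSet_Ioi fun r hr =>
          setLIntegral_Ioo_indicator_polarCoord_symm c hE s hr
    _ = _ := by
        rw [withDensity_apply _ hs, ← lintegral_indicator measurableSet_Ioi,
          ← lintegral_indicator hs, indicator_indicator, indicator_indicator, inter_comm]

def eccentricAnnulus (R₁ R₂ d : ℝ) : Set (ℝ × ℝ) :=
  {x | x.1 ^ 2 + x.2 ^ 2 ≤ R₁ ^ 2} \ {x | (x.1 - d) ^ 2 + x.2 ^ 2 ≤ R₂ ^ 2}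

noncomputable def eccentricAnnulusDistDensity (R₁ R₂ d r : ℝ) : ℝ :=
  if R₂ ≤ r ∧ r ≤ R₁ - d then 2 * r / (R₁ ^ 2 - R₂ ^ 2)
  else if R₁ - d < r ∧ r ≤ R₁ + d then
    2 * r / (π * (R₁ ^ 2 - R₂ ^ 2)) * arccos ((d ^ 2 + r ^ 2 - R₁ ^ 2) / (2 * d * r))
  else 0

section EccentricAnnulus

variable {R₁ R₂ d r : ℝ}

theorem measurableSet_eccentricAnnulus : MeasurableSet (eccentricAnnulus R₁ R₂ d) :=
  (measurableSet_le (by fun_prop) measurable_const).diff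
    (measurableSet_le (by fun_prop) measurable_const)

theorem volume_eccentricAnnulus (hR₂ : 0 ≤ R₂) (hd : 0 ≤ d) (hsub : R₂ + d ≤ R₁) :
    volume (eccentricAnnulus R₁ R₂ d) = ENNReal.ofReal (π * (R₁ ^ 2 - R₂ ^ 2)) := by
  have hinner : {x : ℝ × ℝ | (x.1 - d) ^ 2 + x.2 ^ 2 ≤ R₂ ^ 2} ⊆
      {x | x.1 ^ 2 + x.2 ^ 2 ≤ R₁ ^ 2} := by
    intro x (hx : (x.1 - d) ^ 2 + x.2 ^ 2 ≤ R₂ ^ 2)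
    have h1 : x.1 ≤ R₂ + d := by nlinarith [sq_nonneg (x.1 - d - R₂), sq_nonneg x.2]
    show x.1 ^ 2 + x.2 ^ 2 ≤ R₁ ^ 2
    nlinarith
  have hdisk (a : ℝ) (R : ℝ) :
      volume {x : ℝ × ℝ | (x.1 - a) ^ 2 + x.2 ^ 2 ≤ R ^ 2} = ENNReal.ofReal (π * R ^ 2) := by
    simpa using volume_disk (a, 0) R
  have hdisk₀ :
      volume {x : ℝ × ℝ | x.1 ^ 2 + x.2 ^ 2 ≤ R₁ ^ 2} = ENNReal.ofReal (π * R₁ ^ 2) := by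
    simpa using hdisk 0 R₁
  rw [eccentricAnnulus, measure_sdiff hinner
      (measurableSet_le (by fun_prop) measurable_const).nullMeasurableSet
      (by simp [hdisk]), hdisk₀, hdisk,
    ← ENNReal.ofReal_sub _ (by positivity), mul_sub]

theorem add_polarCoord_symm_mem_eccentricAnnulus_iff {θ : ℝ} :
    ((d, 0) : ℝ × ℝ) + polarCoord.symm (r, θ) ∈ eccentricAnnulus R₁ R₂ d ↔
      d ^ 2 + r ^ 2 + 2 * d * r * cos θ ≤ R₁ ^ 2 ∧ R₂ ^ 2 < r ^ 2 := by
  have h := cos_sq_add_sin_sq θ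
  simp only [eccentricAnnulus, polarCoord_symm_apply, mem_sdiff, mem_ofPred_eq, Prod.fst_add,
    Prod.snd_add, zero_add, add_sub_cancel_left, not_le]
  constructor <;> rintro ⟨h₁, h₂⟩ <;> constructor <;> nlinarith

theorem angularSlice_eccentricAnnulus_of_lt (hR₂ : 0 ≤ R₂) (hd : 0 < d) (hr : R₂ < r) :
    angularSlice (d, 0) (eccentricAnnulus R₁ R₂ d) r =
      {θ ∈ Ioo (-π) π | cos θ ≤ -((d ^ 2 + r ^ 2 - R₁ ^ 2) / (2 * d * r))} := by
  have hr₀ : 0 < r := hR₂.trans_lt hr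
  have hdr : 0 < 2 * d * r := by positivity
  ext θ
  simp only [angularSlice, mem_ofPred_eq, add_polarCoord_symm_mem_eccentricAnnulus_iff]
  refine and_congr_right fun _ => ?_
  rw [le_neg, div_le_iff₀ hdr]
  constructor
  · rintro ⟨h, -⟩
    linarith
  · intro h
    constructor <;> nlinarith

theorem angularSlice_eccentricAnnulus_of_le (hr₀ : 0 ≤ r) (hr : r ≤ R₂) :
    angularSlice (d, 0) (eccentricAnnulus R₁ R₂ d) r = ∅ := by
  ext θ
  simp only [angularSlice, mem_ofPred_eq, add_polarCoord_symm_mem_eccentricAnnulus_iff,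
    mem_empty_iff_false, iff_false, not_and, not_lt]
  intro _ _
  nlinarith

theorem eccentricAnnulusDistDensity_of_lt (hsub : R₂ + d ≤ R₁) (hr : r < R₂) :
    eccentricAnnulusDistDensity R₁ R₂ d r = 0 := by
  rw [eccentricAnnulusDistDensity, if_neg (fun h => by linarith [h.1]),
    if_neg (fun h => by linarith [h.1])]

theorem mul_eccentricAnnulusDistDensity (hR₂ : 0 < R₂) (hd : 0 < d) (hsub : R₂ + d < R₁)
    (hr : R₂ < r) :
    π * (R₁ ^ 2 - R₂ ^ 2) * eccentricAnnulusDistDensity R₁ R₂ d r =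
      r * (2 * arccos ((d ^ 2 + r ^ 2 - R₁ ^ 2) / (2 * d * r))) := by
  have hdr : 0 < 2 * d * r := by nlinarith
  have hK : 0 < R₁ ^ 2 - R₂ ^ 2 := by nlinarith
  have hπ := pi_pos
  rw [eccentricAnnulusDistDensity]
  split_ifs with h₁ h₂
  · rw [arccos_of_le_neg_one ((div_le_iff₀ hdr).2 (by nlinarith))]
    field_simp
  · field_simp
  · have hmid : R₁ - d < r := not_le.mp fun h => h₁ ⟨hr.le, h⟩
    have hfar : R₁ + d < r := not_le.mp fun h => h₂ ⟨hmid, h⟩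
    rw [arccos_of_one_le ((le_div_iff₀ hdr).2 (by nlinarith))]
    ring

theorem indicator_volume_angularSlice_eccentricAnnulus (hR₂ : 0 < R₂) (hd : 0 < d)
    (hsub : R₂ + d < R₁) (hr : r ≠ R₂) :
    (Ioi 0).indicator (fun r => ENNReal.ofReal r *
        volume (angularSlice (d, 0) (eccentricAnnulus R₁ R₂ d) r)) r =
      ENNReal.ofReal (π * (R₁ ^ 2 - R₂ ^ 2)) *
        ENNReal.ofReal (eccentricAnnulusDistDensity R₁ R₂ d r) := by
  rcases hr.lt_or_gt with hr | hr
  · rw [eccentricAnnulusDistDensity_of_lt hsub.le hr, ENNReal.ofReal_zero, mul_zero]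
    rcases le_or_gt r 0 with hr₀ | hr₀
    · exact indicator_of_notMem (not_lt.2 hr₀) _
    · rw [indicator_of_mem (show r ∈ Ioi 0 from hr₀),
        angularSlice_eccentricAnnulus_of_le hr₀.le hr.le, measure_empty, mul_zero]
  · have hr₀ : 0 < r := hR₂.trans hr
    have hC : 0 < π * (R₁ ^ 2 - R₂ ^ 2) := mul_pos pi_pos (by nlinarith)
    rw [indicator_of_mem (show r ∈ Ioi 0 from hr₀),
      angularSlice_eccentricAnnulus_of_lt hR₂.le hd hr, volume_sep_cos_le, neg_neg,
      ← ENNReal.ofReal_mul hr₀.le, ← ENNReal.ofReal_mul hC.le,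
      mul_eccentricAnnulusDistDensity hR₂ hd hsub hr]

end EccentricAnnulus

/-- For `P` uniform on `S₁ \ S₂` (disk of radius `R₁` at the origin minus
disk of radius `R₂` at `C = (d,0)`, with `R₂ + d < R₁`), the distance `r_T = |P − C|`
has density `2r/(R₁²−R₂²)` on `[R₂, R₁−d]` and
`(2r/(π(R₁²−R₂²)))·arccos((d²+r²−R₁²)/(2dr))` on `(R₁−d, R₁+d]`. -/
theorem stmt9 (R₁ R₂ d : ℝ) (hR₂ : 0 < R₂) (hd : 0 < d) (hsub : R₂ + d < R₁)
    (A : Set (ℝ × ℝ))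
    (hA : A = {x : ℝ × ℝ | x.1 ^ 2 + x.2 ^ 2 ≤ R₁ ^ 2} \
              {x : ℝ × ℝ | (x.1 - d) ^ 2 + x.2 ^ 2 ≤ R₂ ^ 2})
    (P : Measure (ℝ × ℝ)) (hP : P = (volume A)⁻¹ • volume.restrict A) :
    P.map (fun x => Real.sqrt ((x.1 - d) ^ 2 + x.2 ^ 2)) = volume.withDensity (fun r =>
      ENNReal.ofReal (
        if R₂ ≤ r ∧ r ≤ R₁ - d then 2 * r / (R₁ ^ 2 - R₂ ^ 2)
        else if R₁ - d < r ∧ r ≤ R₁ + d then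
          2 * r / (Real.pi * (R₁ ^ 2 - R₂ ^ 2)) *
            Real.arccos ((d ^ 2 + r ^ 2 - R₁ ^ 2) / (2 * d * r))
        else 0)) := by
  obtain rfl : A = eccentricAnnulus R₁ R₂ d := hA
  have hC : 0 < π * (R₁ ^ 2 - R₂ ^ 2) := mul_pos pi_pos (by nlinarith)
  have hcenter : (fun x : ℝ × ℝ => √((x.1 - d) ^ 2 + x.2 ^ 2)) =
      fun x => √((x.1 - ((d, 0) : ℝ × ℝ).1) ^ 2 + (x.2 - ((d, 0) : ℝ × ℝ).2) ^ 2) := by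
    simp
  rw [hP, Measure.map_smul, hcenter,
    map_restrict_euclideanDist_eq_withDensity _ measurableSet_eccentricAnnulus,
    volume_eccentricAnnulus hR₂.le hd.le hsub.le, ← withDensity_smul' _ _ (by simpa using hC)]
  refine withDensity_congr_ae ?_
  filter_upwards [compl_mem_ae_iff.2 (measure_singleton R₂)] with r (hr : r ≠ R₂)
  rw [Pi.smul_apply, smul_eq_mul, indicator_volume_angularSlice_eccentricAnnulus hR₂ hd hsub hr,
    ← mul_assoc, ENNReal.inv_mul_cancel (by simpa using hC) (by simp), one_mul]
  rfl
end

section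
/- Conditioned on the 3-D distance Z_c = z, the angle Ω between the ground projection of the TsUE–ABS link and the direction from the stadium center to the TBS is uniformly distributed: on [0, 2π) when √(R₂² + h²) ≤ z ≤ √((R₁ − d)² + h²), and uniform on [−ω̂, ω̂] with density 1/(2ω̂) when √((R₁ − d)² + h²) < z ≤ √((R₁ + d)² + h²), where ω̂ = arcsec(2d√(z² − h²)/(d² + z² − h² − R₁²)). -/
/-!
Write the TsUE as `x = C - r (cos ω, sin ω)`. Translating by `C` and passing to polar coordinates
turns Lebesgue measure into `r dr dω`, and the substitution `z = √(r² + h²)` turns `r dr` into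
`z dz`; so `(Z_c, Ω)` pushes Lebesgue measure of the plane forward to `z dz dω` on
`(h, ∞) × (-π, π)`. By the law of cosines, `x ∈ S₁ \ S₂` reads `R₂ < r` and
`r² + d² - 2 d r cos ω ≤ R₁²`: for `r ≤ R₁ - d` this holds for every `ω`, and for
`R₁ - d < r ≤ R₁ + d` it means `|ω| ≤ arccos ((d² + r² - R₁²) / (2 d r))`. Dividing by the area
`π (R₁² - R₂²)` gives the stated density away from finitely many null lines.
-/

open MeasureTheory Set Real

lemma smul_restrict_withDensity_ofReal {α : Type*} [MeasurableSpace α] {μ : Measure α} {c : ℝ}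
    (hc : 0 < c) {E U : Set α} (hE : MeasurableSet E) (hU : MeasurableSet U) {f : α → ℝ}
    (hf : Measurable f) :
    (ENNReal.ofReal c)⁻¹ • ((μ.restrict U).withDensity fun x => ENNReal.ofReal (f x)).restrict E =
      μ.withDensity fun x => ENNReal.ofReal ((E ∩ U).indicator (fun x => f x / c) x) := by
  rw [restrict_withDensity hE, Measure.restrict_restrict hE, ← withDensity_smul _ (by fun_prop),
    ← withDensity_indicator (hE.inter hU)]
  congr 1
  funext x
  by_cases hx : x ∈ E ∩ U
  · rw [indicator_of_mem hx, indicator_of_mem hx, Pi.smul_apply, smul_eq_mul,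
      ENNReal.ofReal_div_of_pos hc, ENNReal.div_eq_inv_mul]
  · rw [indicator_of_notMem hx, indicator_of_notMem hx, ENNReal.ofReal_zero]

lemma strictMonoOn_sqrt_sq_add_sq (h : ℝ) :
    StrictMonoOn (fun r : ℝ => √(r ^ 2 + h ^ 2)) (Ici 0) := fun r hr s _ hrs =>
  Real.sqrt_lt_sqrt (by positivity) (by gcongr)

lemma hasDerivAt_sqrt_sq_add_sq {h r : ℝ} (hr : r ≠ 0) :
    HasDerivAt (fun t : ℝ => √(t ^ 2 + h ^ 2)) (r / √(r ^ 2 + h ^ 2)) r := by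
  have hpos : 0 < r ^ 2 + h ^ 2 := by positivity
  convert ((hasDerivAt_pow 2 r).add_const (h ^ 2)).sqrt hpos.ne' using 1
  field_simp
  ring

lemma image_sqrt_sq_add_sq_Ioi {h : ℝ} (hh : 0 ≤ h) :
    (fun r : ℝ => √(r ^ 2 + h ^ 2)) '' Ioi 0 = Ioi h := by
  ext z
  constructor
  · rintro ⟨r, hr, rfl⟩
    calc h = √(0 ^ 2 + h ^ 2) := by simp [Real.sqrt_sq hh]
      _ < √(r ^ 2 + h ^ 2) := strictMonoOn_sqrt_sq_add_sq h (mem_Ici.2 le_rfl) (mem_Ioi.1 hr).le hr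
  · intro hz
    have hz2 : 0 < z ^ 2 - h ^ 2 := by nlinarith [mem_Ioi.1 hz]
    refine ⟨√(z ^ 2 - h ^ 2), Real.sqrt_pos.2 hz2, ?_⟩
    simp only
    rw [Real.sq_sqrt hz2.le, sub_add_cancel, Real.sqrt_sq (hh.trans (mem_Ioi.1 hz).le)]

lemma map_withDensity_sqrt_sq_add_sq {h : ℝ} (hh : 0 ≤ h) :
    ((volume.restrict (Ioi 0)).withDensity ENNReal.ofReal).map (fun r => √(r ^ 2 + h ^ 2)) =
      (volume.restrict (Ioi h)).withDensity ENNReal.ofReal := by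
  set φ : ℝ → ℝ := fun r => √(r ^ 2 + h ^ 2)
  have hφ : Measurable φ := by fun_prop
  ext s hs
  have hs' : MeasurableSet (Ioi 0 ∩ φ ⁻¹' s) := measurableSet_Ioi.inter (hφ hs)
  rw [Measure.map_apply hφ hs, withDensity_apply _ (hφ hs), withDensity_apply _ hs,
    Measure.restrict_restrict (hφ hs), Measure.restrict_restrict hs, ← image_sqrt_sq_add_sq_Ioi hh,
    inter_comm s, ← image_inter_preimage, inter_comm (φ ⁻¹' s),
    lintegral_image_eq_lintegral_abs_deriv_mul hs'
      (fun r hr => (hasDerivAt_sqrt_sq_add_sq hr.1.ne').hasDerivWithinAt)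
      ((strictMonoOn_sqrt_sq_add_sq h).injOn.mono fun r hr => mem_Ici.2 hr.1.le)]
  refine setLIntegral_congr_fun hs' fun r hr => ?_
  have hr0 : 0 < r := hr.1
  have hφr : 0 < φ r := Real.sqrt_pos.2 (by positivity)
  rw [← ENNReal.ofReal_mul (abs_nonneg _), abs_of_pos (div_pos hr0 hφr), div_mul_cancel₀ _ hφr.ne']

lemma map_prodMap_withDensity_sqrt_sq_add_sq {h : ℝ} (hh : 0 ≤ h) (J : Set ℝ) :
    ((volume.restrict (Ioi 0 ×ˢ J)).withDensity fun p => ENNReal.ofReal p.1).map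
        (Prod.map (fun r => √(r ^ 2 + h ^ 2)) id) =
      (volume.restrict (Ioi h ×ˢ J)).withDensity fun p => ENNReal.ofReal p.1 := by
  simp only [Measure.volume_eq_prod, ← Measure.prod_restrict]
  rw [← prod_withDensity_left ENNReal.measurable_ofReal,
    ← prod_withDensity_left ENNReal.measurable_ofReal,
    ← Measure.map_prod_map _ _ (by fun_prop) measurable_id, Measure.map_id,
    map_withDensity_sqrt_sq_add_sq hh]

lemma volume_eq_map_polarCoord_symm :
    (volume : Measure (ℝ × ℝ)) =
      ((volume.restrict (Ioi 0 ×ˢ Ioo (-π) π)).withDensity fun p => ENNReal.ofReal p.1).map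
        polarCoord.symm := by
  ext s hs
  have hs' := hs.preimage continuous_polarCoord_symm.measurable
  rw [Measure.map_apply continuous_polarCoord_symm.measurable hs, withDensity_apply _ hs',
    ← lintegral_indicator_one hs, ← lintegral_comp_polarCoord_symm, ← lintegral_indicator hs',
    polarCoord_target]
  refine lintegral_congr fun p => ?_
  by_cases hp : polarCoord.symm p ∈ s
  · rw [indicator_of_mem hp, indicator_of_mem (mem_preimage.2 hp), Pi.one_apply, smul_eq_mul,
      mul_one]
  · rw [indicator_of_notMem hp, indicator_of_notMem (mt mem_preimage.1 hp), smul_zero]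

noncomputable def distArgFrom (c : ℝ × ℝ) (h : ℝ) (x : ℝ × ℝ) : ℝ × ℝ :=
  (√((x.1 - c.1) ^ 2 + (x.2 - c.2) ^ 2 + h ^ 2), Complex.arg ⟨c.1 - x.1, c.2 - x.2⟩)

lemma measurable_distArgFrom (c : ℝ × ℝ) (h : ℝ) : Measurable (distArgFrom c h) :=
  (by fun_prop : Measurable fun x : ℝ × ℝ => √((x.1 - c.1) ^ 2 + (x.2 - c.2) ^ 2 + h ^ 2)).prodMk
    (Complex.measurable_arg.comp (Complex.measurableEquivRealProd.symm.measurable.comp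
      (f := fun x : ℝ × ℝ => (c.1 - x.1, c.2 - x.2)) (by fun_prop)))

lemma distArgFrom_sub_polarCoord_symm (c : ℝ × ℝ) (h : ℝ) {p : ℝ × ℝ}
    (hp : p ∈ Ioi 0 ×ˢ Ioo (-π) π) :
    distArgFrom c h (c - polarCoord.symm p) = Prod.map (fun r => √(r ^ 2 + h ^ 2)) id p := by
  obtain ⟨r, θ⟩ := p
  obtain ⟨hr, hθ⟩ := hp
  have hpolar : (⟨c.1 - (c.1 - r * cos θ), c.2 - (c.2 - r * sin θ)⟩ : ℂ) =
      r * (Complex.cos θ + Complex.sin θ * Complex.I) := by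
    apply Complex.ext <;> simp [Complex.cos_ofReal_re, Complex.sin_ofReal_re]
  simp only [distArgFrom, polarCoord_symm_apply, Prod.fst_sub, Prod.snd_sub, Prod.map_apply, id,
    hpolar, Complex.arg_mul_cos_add_sin_mul_I hr ⟨hθ.1, hθ.2.le⟩]
  congr 2
  linear_combination r ^ 2 * sin_sq_add_cos_sq θ

lemma map_volume_distArgFrom (c : ℝ × ℝ) {h : ℝ} (hh : 0 ≤ h) :
    volume.map (distArgFrom c h) =
      (volume.restrict (Ioi h ×ˢ Ioo (-π) π)).withDensity fun p => ENNReal.ofReal p.1 := by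
  calc volume.map (distArgFrom c h) = (volume.map (c - ·)).map (distArgFrom c h) := by
        rw [(Measure.measurePreserving_sub_left volume c).map_eq]
    _ = ((volume.restrict (Ioi 0 ×ˢ Ioo (-π) π)).withDensity fun p => ENNReal.ofReal p.1).map
          (distArgFrom c h ∘ (c - ·) ∘ polarCoord.symm) := by
        nth_rw 1 [volume_eq_map_polarCoord_symm]
        rw [Measure.map_map (by fun_prop) continuous_polarCoord_symm.measurable,
          Measure.map_map (measurable_distArgFrom c h) (by fun_prop)]
    _ = ((volume.restrict (Ioi 0 ×ˢ Ioo (-π) π)).withDensity fun p => ENNReal.ofReal p.1).map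
          (Prod.map (fun r => √(r ^ 2 + h ^ 2)) id) := by
        refine Measure.map_congr ?_
        filter_upwards [(withDensity_absolutelyContinuous _ _).ae_le
          (ae_restrict_mem (measurableSet_Ioi.prod measurableSet_Ioo))] with p hp
          using distArgFrom_sub_polarCoord_symm c h hp
    _ = _ := map_prodMap_withDensity_sqrt_sq_add_sq hh _

lemma volume_setOf_sub_sq_add_sub_sq_le (a b R : ℝ) :
    volume {x : ℝ × ℝ | (x.1 - a) ^ 2 + (x.2 - b) ^ 2 ≤ R ^ 2} = ENNReal.ofReal (π * R ^ 2) := by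
  have hpre : Complex.measurableEquivRealProd ⁻¹'
      {x : ℝ × ℝ | (x.1 - a) ^ 2 + (x.2 - b) ^ 2 ≤ R ^ 2} = Metric.closedBall ⟨a, b⟩ |R| := by
    ext z
    rw [mem_preimage, mem_ofPred_eq, Metric.mem_closedBall, Complex.dist_eq,
      ← sq_le_sq₀ (norm_nonneg _) (abs_nonneg R), sq_abs, Complex.sq_norm, Complex.normSq_apply]
    simp [sq]
  rw [← Complex.volume_preserving_equiv_real_prod.measure_preimage
      (measurableSet_le (by fun_prop) measurable_const).nullMeasurableSet, hpre,
    Complex.volume_closedBall, ← ENNReal.ofReal_pow (abs_nonneg R), ← ENNReal.ofReal_coe_nnreal,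
    ← ENNReal.ofReal_mul (by positivity), NNReal.coe_real_pi, sq_abs, mul_comm]

lemma volume_sdiff_setOf_sub_sq_add_sub_sq_le {a b a' b' R R' : ℝ}
    (hsub : {x : ℝ × ℝ | (x.1 - a') ^ 2 + (x.2 - b') ^ 2 ≤ R' ^ 2} ⊆
      {x : ℝ × ℝ | (x.1 - a) ^ 2 + (x.2 - b) ^ 2 ≤ R ^ 2}) :
    volume ({x : ℝ × ℝ | (x.1 - a) ^ 2 + (x.2 - b) ^ 2 ≤ R ^ 2} \
      {x : ℝ × ℝ | (x.1 - a') ^ 2 + (x.2 - b') ^ 2 ≤ R' ^ 2}) =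
      ENNReal.ofReal (π * (R ^ 2 - R' ^ 2)) := by
  rw [measure_sdiff hsub (measurableSet_le (by fun_prop) measurable_const).nullMeasurableSet
      (by rw [volume_setOf_sub_sq_add_sub_sq_le]; exact ENNReal.ofReal_ne_top),
    volume_setOf_sub_sq_add_sub_sq_le, volume_setOf_sub_sq_add_sub_sq_le,
    ← ENNReal.ofReal_sub _ (by positivity), mul_sub]

lemma abs_le_arccos_iff_le_cos {x θ : ℝ} (hθ : |θ| ≤ π) (hx : x ≤ 1) :
    |θ| ≤ arccos x ↔ x ≤ cos θ := by
  rcases le_total x (-1) with hx' | hx'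
  · rw [arccos_of_le_neg_one hx']
    exact iff_of_true hθ (hx'.trans (neg_one_le_cos θ))
  · rw [← cos_abs]
    conv_lhs => rw [← arccos_cos (abs_nonneg θ) hθ]
    exact strictAntiOn_arccos.le_iff_ge ⟨neg_one_le_cos _, cos_le_one _⟩ ⟨hx', hx⟩

lemma sq_add_sq_sub_two_mul_mul_cos_le_sq_iff {d ρ R θ : ℝ} (hd : 0 < d) (hρ : 0 < ρ)
    (hdR : d < R) (hθ : |θ| ≤ π) :
    ρ ^ 2 + d ^ 2 - 2 * d * ρ * cos θ ≤ R ^ 2 ↔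
      ρ ≤ R - d ∨ (ρ ≤ R + d ∧ |θ| ≤ arccos ((d ^ 2 + ρ ^ 2 - R ^ 2) / (2 * d * ρ))) := by
  have hdρ : 0 < 2 * d * ρ := by positivity
  have hcos : ρ ≤ R + d →
      (|θ| ≤ arccos ((d ^ 2 + ρ ^ 2 - R ^ 2) / (2 * d * ρ)) ↔
        ρ ^ 2 + d ^ 2 - 2 * d * ρ * cos θ ≤ R ^ 2) := by
    intro hρR
    rw [abs_le_arccos_iff_le_cos hθ ((div_le_one hdρ).2 (by nlinarith)), div_le_iff₀ hdρ]
    constructor <;> intro <;> linarith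
  constructor
  · intro hle
    by_cases hρR : ρ ≤ R - d
    · exact .inl hρR
    · have : ρ ≤ R + d := by nlinarith [cos_le_one θ]
      exact .inr ⟨this, (hcos this).2 hle⟩
  · rintro (hρR | ⟨hρR, hθ'⟩)
    · nlinarith [neg_one_le_cos θ]
    · exact (hcos hρR).1 hθ'

/-- The pairs `(z, ω)` whose ground point `C - ρ (cos ω, sin ω)`, `ρ = √(z² - h²)`, lies in
`S₁ \ S₂`: its squared distance to the origin is `ρ² + d² - 2 d ρ cos ω`. -/
def distAngleRegion (R₁ R₂ d h : ℝ) : Set (ℝ × ℝ) :=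
  {p | R₂ ^ 2 < p.1 ^ 2 - h ^ 2 ∧
    p.1 ^ 2 - h ^ 2 + d ^ 2 - 2 * d * √(p.1 ^ 2 - h ^ 2) * cos p.2 ≤ R₁ ^ 2}

lemma measurableSet_distAngleRegion (R₁ R₂ d h : ℝ) :
    MeasurableSet (distAngleRegion R₁ R₂ d h) := by
  simp only [distAngleRegion, ofPred_and]
  exact (measurableSet_lt (by fun_prop) (by fun_prop)).inter
    (measurableSet_le (by fun_prop) (by fun_prop))

lemma mk_sqrt_sq_add_sq_mem_distAngleRegion_iff {R₁ R₂ d h ρ : ℝ} (θ : ℝ) (hR₂ : 0 ≤ R₂)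
    (hρ : 0 ≤ ρ) :
    (√(ρ ^ 2 + h ^ 2), θ) ∈ distAngleRegion R₁ R₂ d h ↔
      R₂ < ρ ∧ ρ ^ 2 + d ^ 2 - 2 * d * ρ * cos θ ≤ R₁ ^ 2 := by
  rw [distAngleRegion, mem_ofPred_eq, sq_sqrt (by positivity), add_sub_cancel_right, sqrt_sq hρ,
    sq_lt_sq₀ hR₂ hρ]

lemma preimage_distArgFrom_distAngleRegion (R₁ R₂ d h : ℝ) :
    distArgFrom (d, 0) h ⁻¹' distAngleRegion R₁ R₂ d h =
      {x : ℝ × ℝ | x.1 ^ 2 + x.2 ^ 2 ≤ R₁ ^ 2} \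
        {x : ℝ × ℝ | (x.1 - d) ^ 2 + x.2 ^ 2 ≤ R₂ ^ 2} := by
  ext x
  have hsq : √((x.1 - d) ^ 2 + (x.2 - 0) ^ 2 + h ^ 2) ^ 2 - h ^ 2 = (x.1 - d) ^ 2 + x.2 ^ 2 := by
    rw [sq_sqrt (by positivity)]
    ring
  have hcos : √((x.1 - d) ^ 2 + x.2 ^ 2) * cos (Complex.arg ⟨d - x.1, 0 - x.2⟩) = d - x.1 := by
    have := Complex.norm_mul_cos_arg ⟨d - x.1, 0 - x.2⟩
    rw [Complex.norm_def, Complex.normSq_mk] at this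
    convert this using 3
    ring
  simp only [mem_preimage, distArgFrom, distAngleRegion, mem_ofPred_eq, mem_sdiff, hsq, not_le]
  rw [mul_assoc (2 * d), hcos]
  constructor <;> rintro ⟨h₁, h₂⟩ <;> exact ⟨by linarith, by linarith⟩

noncomputable def distAngleDensity (R₁ R₂ d h : ℝ) (p : ℝ × ℝ) : ℝ :=
  if Real.sqrt (R₂ ^ 2 + h ^ 2) ≤ p.1 ∧ p.1 ≤ Real.sqrt ((R₁ - d) ^ 2 + h ^ 2)
      ∧ -Real.pi ≤ p.2 ∧ p.2 ≤ Real.pi then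
    (2 * p.1 / (R₁ ^ 2 - R₂ ^ 2)) * (1 / (2 * Real.pi))
  else if Real.sqrt ((R₁ - d) ^ 2 + h ^ 2) < p.1
      ∧ p.1 ≤ Real.sqrt ((R₁ + d) ^ 2 + h ^ 2)
      ∧ |p.2| ≤ Real.arccos
          ((d ^ 2 + p.1 ^ 2 - h ^ 2 - R₁ ^ 2) / (2 * d * Real.sqrt (p.1 ^ 2 - h ^ 2))) then
    (2 * p.1 / (Real.pi * (R₁ ^ 2 - R₂ ^ 2)) *
        Real.arccos
          ((d ^ 2 + p.1 ^ 2 - h ^ 2 - R₁ ^ 2) / (2 * d * Real.sqrt (p.1 ^ 2 - h ^ 2)))) *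
      (1 / (2 * Real.arccos
          ((d ^ 2 + p.1 ^ 2 - h ^ 2 - R₁ ^ 2) / (2 * d * Real.sqrt (p.1 ^ 2 - h ^ 2)))))
  else 0

lemma distAngleDensity_of_le {R₁ R₂ d h z : ℝ} (θ : ℝ) (hR₂ : 0 < R₂) (hh : 0 ≤ h) (hdR : d < R₁)
    (hz : z ≤ h) : distAngleDensity R₁ R₂ d h (z, θ) = 0 := by
  have hlt : ∀ {a}, 0 < a → z < √(a ^ 2 + h ^ 2) := fun ha =>
    hz.trans_lt ((image_sqrt_sq_add_sq_Ioi hh).subset (mem_image_of_mem _ ha))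
  rw [distAngleDensity, if_neg fun hc => (hlt hR₂).not_ge hc.1,
    if_neg fun hc => (hlt (sub_pos.2 hdR)).not_gt hc.1]

/-- At `ρ = R₁ + d` the formula degenerates: `ω̂ = 0`, and `1 / (2 ω̂) = 0` in Lean. -/
lemma distAngleDensity_sqrt_sq_add_sq {R₁ R₂ d h ρ θ : ℝ} (hR₂ : 0 < R₂) (hd : 0 < d)
    (hR : R₂ + d < R₁) (hρ : 0 < ρ) (hρ₂ : ρ ≠ R₂) (hρ₁ : ρ ≠ R₁ + d) (hθ : |θ| ≠ π) :
    distAngleDensity R₁ R₂ d h (√(ρ ^ 2 + h ^ 2), θ) =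
      if R₂ < ρ ∧ ρ ^ 2 + d ^ 2 - 2 * d * ρ * cos θ ≤ R₁ ^ 2 ∧ |θ| < π then
        √(ρ ^ 2 + h ^ 2) / (π * (R₁ ^ 2 - R₂ ^ 2))
      else 0 := by
  have hmono := strictMonoOn_sqrt_sq_add_sq h
  have hnum : d ^ 2 + (ρ ^ 2 + h ^ 2) - h ^ 2 - R₁ ^ 2 = d ^ 2 + ρ ^ 2 - R₁ ^ 2 := by ring
  simp only [distAngleDensity, sq_sqrt (by positivity : 0 ≤ ρ ^ 2 + h ^ 2), hnum,
    add_sub_cancel_right, sqrt_sq hρ.le, hmono.le_iff_le hR₂.le hρ.le,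
    hmono.le_iff_le hρ.le (by linarith : 0 ≤ R₁ - d),
    hmono.lt_iff_lt (by linarith : 0 ≤ R₁ - d) hρ.le,
    hmono.le_iff_le hρ.le (by linarith : 0 ≤ R₁ + d), ← abs_le]
  by_cases hθπ : |θ| < π
  swap
  · have hθπ' : ¬|θ| ≤ π := fun hle => hθπ (hle.lt_of_ne hθ)
    rw [if_neg fun hc => hθπ' hc.2.2, if_neg fun hc => hθπ' (hc.2.2.trans (arccos_le_pi _)),
      if_neg fun hc => hθπ hc.2.2]
  simp only [sq_add_sq_sub_two_mul_mul_cos_le_sq_iff hd hρ (by linarith : d < R₁) hθπ.le, hθπ,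
    and_true]
  set ω := arccos ((d ^ 2 + ρ ^ 2 - R₁ ^ 2) / (2 * d * ρ))
  have hR₂₁ : R₁ ^ 2 - R₂ ^ 2 ≠ 0 := by nlinarith
  by_cases hA₁ : R₂ ≤ ρ ∧ ρ ≤ R₁ - d ∧ |θ| ≤ π
  · rw [if_pos hA₁, if_pos ⟨lt_of_le_of_ne hA₁.1 hρ₂.symm, .inl hA₁.2.1⟩]
    field_simp
  by_cases hA₂ : R₁ - d < ρ ∧ ρ ≤ R₁ + d ∧ |θ| ≤ ω
  · have hρ₁' : ρ < R₁ + d := lt_of_le_of_ne hA₂.2.1 hρ₁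
    have hω : ω ≠ 0 := (arccos_pos.2 ((div_lt_one (by positivity)).2
      (by nlinarith [mul_pos (sub_pos.2 hρ₁') (by linarith : 0 < ρ - d + R₁)]))).ne'
    rw [if_neg hA₁, if_pos hA₂, if_pos ⟨by linarith [hA₂.1], .inr hA₂.2⟩]
    field_simp
  rw [if_neg hA₁, if_neg hA₂, if_neg]
  rintro ⟨hρR₂, hρR | hρR⟩
  · exact hA₁ ⟨hρR₂.le, hρR, hθπ.le⟩
  · rcases le_or_gt ρ (R₁ - d) with h' | h'
    · exact hA₁ ⟨hρR₂.le, h', hθπ.le⟩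
    · exact hA₂ ⟨h', hρR⟩

lemma distAngleDensity_eq_indicator {R₁ R₂ d h z θ : ℝ} (hR₂ : 0 < R₂) (hd : 0 < d)
    (hh : 0 ≤ h) (hR : R₂ + d < R₁) (hz₂ : z ≠ √(R₂ ^ 2 + h ^ 2))
    (hz₁ : z ≠ √((R₁ + d) ^ 2 + h ^ 2)) (hθ : |θ| ≠ π) :
    distAngleDensity R₁ R₂ d h (z, θ) =
      (distAngleRegion R₁ R₂ d h ∩ Ioi h ×ˢ Ioo (-π) π).indicator
        (fun p => p.1 / (π * (R₁ ^ 2 - R₂ ^ 2))) (z, θ) := by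
  classical
  rcases le_or_gt z h with hzh | hzh
  · rw [distAngleDensity_of_le θ hR₂ hh (by linarith) hzh,
      indicator_of_notMem fun hm => hzh.not_gt hm.2.1]
  obtain ⟨ρ, hρ, rfl⟩ : ∃ ρ, 0 < ρ ∧ √(ρ ^ 2 + h ^ 2) = z :=
    (image_sqrt_sq_add_sq_Ioi hh).symm.subset hzh
  rw [distAngleDensity_sqrt_sq_add_sq hR₂ hd hR hρ (fun e => hz₂ (by rw [e]))
    (fun e => hz₁ (by rw [e])) hθ, indicator_apply]
  simp only [mem_inter_iff, mk_sqrt_sq_add_sq_mem_distAngleRegion_iff θ hR₂.le hρ.le, mem_prod,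
    mem_Ioi, mem_Ioo, ← abs_lt, hzh, true_and, and_assoc]

lemma distAngleDensity_ae_eq_indicator {R₁ R₂ d h : ℝ} (hR₂ : 0 < R₂) (hd : 0 < d) (hh : 0 ≤ h)
    (hR : R₂ + d < R₁) :
    distAngleDensity R₁ R₂ d h =ᵐ[volume]
      (distAngleRegion R₁ R₂ d h ∩ Ioi h ×ˢ Ioo (-π) π).indicator
        (fun p => p.1 / (π * (R₁ ^ 2 - R₂ ^ 2))) := by
  have hfst : ∀ a : ℝ, ∀ᵐ p : ℝ × ℝ, p.1 ≠ a := fun a =>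
    (Measure.quasiMeasurePreserving_fst (μ := (volume : Measure ℝ))
      (ν := (volume : Measure ℝ))).ae (Measure.ae_ne volume a)
  have hsnd : ∀ᵐ p : ℝ × ℝ, |p.2| ≠ π := by
    refine (Measure.quasiMeasurePreserving_snd (μ := (volume : Measure ℝ))
      (ν := (volume : Measure ℝ))).ae (p := fun θ => |θ| ≠ π) ?_
    filter_upwards [(toFinite {π, -π}).countable.ae_notMem volume] with θ hθ habs
    exact hθ ((abs_eq pi_pos.le).1 habs)
  filter_upwards [hfst _, hfst _, hsnd] with p h₂ h₁ hθ
  exact distAngleDensity_eq_indicator hR₂ hd hh hR h₂ h₁ hθ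

/-- Conditioned on `Z_c = z`, the angle `Ω` between the ground projection of the
TsUE–ABS link and the direction from the stadium center to the TBS is uniform (density `1/(2π)`)
for `√(R₂²+h²) ≤ z ≤ √((R₁−d)²+h²)`, and uniform on `[−ω̂, ω̂]` (density `1/(2ω̂)`) for
`√((R₁−d)²+h²) < z ≤ √((R₁+d)²+h²)`, where `ω̂ = arccos((d²+z²−h²−R₁²)/(2d√(z²−h²)))`.
Formalized via the joint density `f_{Z_c,Ω}(z,ω) = f_{Z_c}(z) · f_{Ω}(ω|z)`. -/
theorem stmt11 (R₁ R₂ d h : ℝ) (hR₂ : 0 < R₂) (hd : 0 < d) (hh : 0 < h)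
    (hsub : R₂ + d < R₁)
    (A : Set (ℝ × ℝ))
    (hA : A = {x : ℝ × ℝ | x.1 ^ 2 + x.2 ^ 2 ≤ R₁ ^ 2} \
              {x : ℝ × ℝ | (x.1 - d) ^ 2 + x.2 ^ 2 ≤ R₂ ^ 2})
    (P : Measure (ℝ × ℝ)) (hP : P = (volume A)⁻¹ • volume.restrict A)
    (Zc : ℝ × ℝ → ℝ) (hZc : Zc = fun x => Real.sqrt ((x.1 - d) ^ 2 + x.2 ^ 2 + h ^ 2))
    -- signed angle at the stadium center `C = (d,0)` between the ray to the TsUE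
    -- and the ray toward the TBS (the origin):
    (W : ℝ × ℝ → ℝ) (hW : W = fun x => Complex.arg ⟨d - x.1, -x.2⟩) :
    P.map (fun x => (Zc x, W x)) = volume.withDensity (fun p =>
      ENNReal.ofReal (
        if Real.sqrt (R₂ ^ 2 + h ^ 2) ≤ p.1 ∧ p.1 ≤ Real.sqrt ((R₁ - d) ^ 2 + h ^ 2)
            ∧ -Real.pi ≤ p.2 ∧ p.2 ≤ Real.pi then
          (2 * p.1 / (R₁ ^ 2 - R₂ ^ 2)) * (1 / (2 * Real.pi))
        else if Real.sqrt ((R₁ - d) ^ 2 + h ^ 2) < p.1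
            ∧ p.1 ≤ Real.sqrt ((R₁ + d) ^ 2 + h ^ 2)
            ∧ |p.2| ≤ Real.arccos
                ((d ^ 2 + p.1 ^ 2 - h ^ 2 - R₁ ^ 2) / (2 * d * Real.sqrt (p.1 ^ 2 - h ^ 2))) then
          (2 * p.1 / (Real.pi * (R₁ ^ 2 - R₂ ^ 2)) *
              Real.arccos
                ((d ^ 2 + p.1 ^ 2 - h ^ 2 - R₁ ^ 2) / (2 * d * Real.sqrt (p.1 ^ 2 - h ^ 2)))) *
            (1 / (2 * Real.arccos
                ((d ^ 2 + p.1 ^ 2 - h ^ 2 - R₁ ^ 2) / (2 * d * Real.sqrt (p.1 ^ 2 - h ^ 2)))))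
        else 0)) := by
  subst hA hP hZc hW
  have hT : (fun x : ℝ × ℝ => (√((x.1 - d) ^ 2 + x.2 ^ 2 + h ^ 2), Complex.arg ⟨d - x.1, -x.2⟩)) =
      distArgFrom (d, 0) h := by
    funext x
    simp [distArgFrom]
  have hvol := volume_sdiff_setOf_sub_sq_add_sub_sq_le (a := 0) (b := 0) (a' := d) (b' := 0)
    (R := R₁) (R' := R₂) fun x hx => by
      simp only [mem_ofPred_eq, sub_zero] at hx ⊢
      have : x.1 - d ≤ R₂ := by nlinarith [sq_nonneg x.2]
      nlinarith
  simp only [sub_zero] at hvol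
  rw [Measure.map_smul, hvol, hT, ← preimage_distArgFrom_distAngleRegion R₁ R₂ d h,
    ← Measure.restrict_map (measurable_distArgFrom _ _) (measurableSet_distAngleRegion _ _ _ _),
    map_volume_distArgFrom _ hh.le,
    smul_restrict_withDensity_ofReal (mul_pos pi_pos (by nlinarith))
      (measurableSet_distAngleRegion _ _ _ _) (measurableSet_Ioi.prod measurableSet_Ioo)
      measurable_fst]
  exact withDensity_congr_ae ((distAngleDensity_ae_eq_indicator hR₂ hd hh.le hsub).fun_comp
    ENNReal.ofReal).symm
end

section
/- If the fading gain G ~ Gamma(m, m) for positive integer m and I is an independent nonnegative random variable, then the coverage probability P(c·G > s·(I + σ²)) for constants c, s, σ² > 0 can be written as Σ_{n=0}^{m−1} ((−t)^n/n!) e^{−tσ²} Σ_{k=0}^{n} C(n,k)(−σ²)^{n−k} L_I^{(k)}(t) evaluated at t = ms/c, where L_I is the Laplace transform of I and L_I^{(k)} its k-th derivative; in particular for m = 1 it reduces to e^{−tσ²} L_I(t). -/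
/-!
For an integer shape `m`, the survival function of `Gamma(m, r)` is the Erlang tail
`e^{-rx} ∑_{n<m} (rx)^n / n!`: its derivative telescopes to minus the density. By independence,
conditioning on `I` turns the coverage probability into `E[e^{-t(I+σ²)} ∑_{n<m} (t(I+σ²))^n / n!]`,
and expanding `(I+σ²)^n` binomially leaves the moments `E[I^k e^{-tI}] = (-1)^k L^{(k)}(t)`.
-/

open MeasureTheory ProbabilityTheory Real Set Filter Topology Finset

noncomputable def erlangTail (m : ℕ) (y : ℝ) : ℝ :=
  exp (-y) * ∑ n ∈ range m, y ^ n / n.factorial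

lemma hasDerivAt_sum_range_pow_div_factorial (k : ℕ) (y : ℝ) :
    HasDerivAt (fun y : ℝ => ∑ n ∈ range (k + 1), y ^ n / n.factorial)
      (∑ n ∈ range k, y ^ n / n.factorial) y := by
  have hsum := HasDerivAt.fun_sum (u := range (k + 1)) fun n _ =>
    ((hasDerivAt_pow n y).div_const (n.factorial : ℝ))
  refine hsum.congr_deriv ?_
  rw [sum_range_succ']
  simp only [CharP.cast_eq_zero, zero_mul, zero_div, add_zero]
  refine sum_congr rfl fun n _ => ?_
  rw [Nat.factorial_succ, Nat.add_sub_cancel]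
  push_cast
  field_simp

lemma hasDerivAt_erlangTail (k : ℕ) (y : ℝ) :
    HasDerivAt (erlangTail (k + 1)) (-(exp (-y) * y ^ k / k.factorial)) y := by
  have h := ((hasDerivAt_neg y).exp).mul (hasDerivAt_sum_range_pow_div_factorial k y)
  refine h.congr_deriv ?_
  rw [sum_range_succ]
  ring

lemma tendsto_erlangTail_atTop (m : ℕ) : Tendsto (erlangTail m) atTop (𝓝 0) := by
  have h : ∀ n ∈ range m, Tendsto (fun y : ℝ => y ^ n * exp (-y) / n.factorial) atTop (𝓝 0) :=
    fun n _ => by simpa using (tendsto_pow_mul_exp_neg_atTop_nhds_zero n).div_const _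
  have hsum := tendsto_finsetSum _ h
  rw [sum_const_zero] at hsum
  refine hsum.congr fun y => ?_
  simp only [erlangTail, mul_sum]
  exact sum_congr rfl fun n _ => by ring

lemma gammaPDFReal_natCast_succ (k : ℕ) (r : ℝ) {u : ℝ} (hu : 0 ≤ u) :
    gammaPDFReal (k + 1 : ℕ) r u = exp (-(r * u)) * (r * u) ^ k / k.factorial * r := by
  rw [gammaPDFReal, if_pos hu, Nat.cast_add_one, Real.Gamma_nat_eq_factorial,
    add_sub_cancel_right, rpow_natCast, ← Nat.cast_add_one, rpow_natCast]
  ring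

theorem gammaMeasure_Ioi_natCast {m : ℕ} (hm : m ≠ 0) {r : ℝ} (hr : 0 < r) {x : ℝ}
    (hx : 0 ≤ x) : gammaMeasure m r (Ioi x) = ENNReal.ofReal (erlangTail m (r * x)) := by
  obtain ⟨k, rfl⟩ : ∃ k, m = k + 1 := ⟨m - 1, by omega⟩
  have hderiv : ∀ u ∈ Ici x,
      HasDerivAt (fun v => -erlangTail (k + 1) (r * v)) (gammaPDFReal (k + 1 : ℕ) r u) u := by
    intro u hu
    rw [gammaPDFReal_natCast_succ k r (hx.trans hu)]
    have := ((hasDerivAt_erlangTail k (r * u)).comp u ((hasDerivAt_id' u).const_mul r)).fun_neg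
    simpa using this
  have hnonneg : ∀ u ∈ Ioi x, 0 ≤ gammaPDFReal (k + 1 : ℕ) r u :=
    fun u _ => gammaPDFReal_nonneg (by positivity) hr u
  have hlim : Tendsto (fun v => -erlangTail (k + 1) (r * v)) atTop (𝓝 0) := by
    simpa using ((tendsto_erlangTail_atTop (k + 1)).comp
      (tendsto_id.const_mul_atTop hr)).neg
  unfold gammaMeasure gammaPDF
  rw [withDensity_apply _ measurableSet_Ioi,
    ← ofReal_integral_eq_lintegral_ofReal
      (integrableOn_Ioi_deriv_of_nonneg' hderiv hnonneg hlim)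
      ((ae_restrict_iff' measurableSet_Ioi).mpr (ae_of_all _ hnonneg)),
    integral_Ioi_of_hasDerivAt_of_nonneg' hderiv hnonneg hlim, zero_sub, neg_neg]

lemma continuous_erlangTail (m : ℕ) : Continuous (erlangTail m) := by
  unfold erlangTail
  fun_prop

lemma erlangTail_nonneg (m : ℕ) {y : ℝ} (hy : 0 ≤ y) : 0 ≤ erlangTail m y :=
  mul_nonneg (exp_nonneg _) (sum_nonneg fun n _ => by positivity)

lemma erlangTail_mul_add (m : ℕ) (t x σ : ℝ) :
    erlangTail m (t * (x + σ))
      = ∑ n ∈ range m, t ^ n / n.factorial * exp (-(t * σ)) * ((x + σ) ^ n * exp (-(t * x))) := by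
  rw [erlangTail, mul_sum]
  refine sum_congr rfl fun n _ => ?_
  rw [show -(t * (x + σ)) = -(t * x) + -(t * σ) by ring, exp_add, mul_pow]
  ring

lemma add_pow_mul_eq_sum (x σ w : ℝ) (n : ℕ) :
    (x + σ) ^ n * w = ∑ k ∈ range (n + 1), (n.choose k : ℝ) * σ ^ (n - k) * (x ^ k * w) := by
  rw [add_pow, sum_mul]
  exact sum_congr rfl fun k _ => by ring

lemma neg_pow_mul_sum_choose_neg_pow (n : ℕ) (t σ : ℝ) (a : ℕ → ℝ) :
    (-t) ^ n * ∑ k ∈ range (n + 1), (n.choose k : ℝ) * (-σ) ^ (n - k) * ((-1) ^ k * a k)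
      = t ^ n * ∑ k ∈ range (n + 1), (n.choose k : ℝ) * σ ^ (n - k) * a k := by
  rw [mul_sum, mul_sum]
  refine sum_congr rfl fun k hk => ?_
  have hsign : (-1 : ℝ) ^ (n - k) * (-1) ^ k = (-1) ^ n :=
    pow_sub_mul_pow _ (Nat.lt_succ_iff.mp (mem_range.mp hk))
  have hsq : (-1 : ℝ) ^ n * (-1) ^ n = 1 := by rw [← pow_add, ← two_mul, pow_mul, neg_one_sq, one_pow]
  rw [neg_pow t, neg_pow σ]
  linear_combination (t ^ n * (n.choose k : ℝ) * σ ^ (n - k) * a k)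
    * ((-1 : ℝ) ^ n * hsign + hsq)

section Integrals

variable {Ω : Type*} [MeasurableSpace Ω] {μ : Measure Ω} {X w : Ω → ℝ}

lemma integrable_add_pow_mul (σ : ℝ) (n : ℕ)
    (hint : ∀ k, Integrable (fun ω => X ω ^ k * w ω) μ) :
    Integrable (fun ω => (X ω + σ) ^ n * w ω) μ := by
  simp_rw [add_pow_mul_eq_sum]
  exact integrable_finsetSum _ fun k _ => (hint k).const_mul _

lemma integral_add_pow_mul (σ : ℝ) (n : ℕ)
    (hint : ∀ k, Integrable (fun ω => X ω ^ k * w ω) μ) :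
    ∫ ω, (X ω + σ) ^ n * w ω ∂μ
      = ∑ k ∈ range (n + 1), (n.choose k : ℝ) * σ ^ (n - k) * ∫ ω, X ω ^ k * w ω ∂μ := by
  simp_rw [add_pow_mul_eq_sum]
  rw [integral_finsetSum _ fun k _ => (hint k).const_mul _]
  simp_rw [integral_const_mul]

lemma integral_erlangTail_mul_add (m : ℕ) (t σ : ℝ)
    (hint : ∀ k, Integrable (fun ω => X ω ^ k * exp (-(t * X ω))) μ) :
    ∫ ω, erlangTail m (t * (X ω + σ)) ∂μ
      = ∑ n ∈ range m, t ^ n / n.factorial * exp (-(t * σ)) *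
          ∑ k ∈ range (n + 1), (n.choose k : ℝ) * σ ^ (n - k) *
            ∫ ω, X ω ^ k * exp (-(t * X ω)) ∂μ := by
  simp_rw [erlangTail_mul_add]
  rw [integral_finsetSum _ fun n _ => (integrable_add_pow_mul σ n hint).const_mul _]
  simp_rw [integral_const_mul, integral_add_pow_mul σ _ hint]

end Integrals

section Independence

variable {Ω : Type*} [MeasurableSpace Ω] {P : Measure Ω} {X Y : Ω → ℝ}

lemma measure_lt_eq_lintegral_map_Ioi [IsFiniteMeasure P] (hX : Measurable X)
    (hY : Measurable Y) (hXY : IndepFun X Y P) :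
    P {ω | X ω < Y ω} = ∫⁻ x, P.map Y (Ioi x) ∂(P.map X) := by
  have hA : MeasurableSet {p : ℝ × ℝ | p.1 < p.2} := measurableSet_lt measurable_fst measurable_snd
  calc P {ω | X ω < Y ω} = P.map (fun ω => (X ω, Y ω)) {p | p.1 < p.2} :=
        (Measure.map_apply (hX.prodMk hY) hA).symm
    _ = ((P.map X).prod (P.map Y)) {p | p.1 < p.2} := by
        rw [(indepFun_iff_map_prod_eq_prod_map_map hX.aemeasurable hY.aemeasurable).mp hXY]
    _ = ∫⁻ x, P.map Y (Ioi x) ∂(P.map X) := Measure.prod_apply hA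

theorem toReal_measure_lt_of_map_eq_gammaMeasure [IsFiniteMeasure P] {m : ℕ} (hm : m ≠ 0)
    {r : ℝ} (hr : 0 < r) (hX : Measurable X) (hY : Measurable Y)
    (hYdist : P.map Y = gammaMeasure m r) (hXnonneg : ∀ ω, 0 ≤ X ω) (hXY : IndepFun X Y P) :
    (P {ω | X ω < Y ω}).toReal = ∫ ω, erlangTail m (r * X ω) ∂P := by
  have hmeas : Measurable fun x => erlangTail m (r * x) :=
    (continuous_erlangTail m).measurable.comp (measurable_const_mul r)
  have hsurv : ∀ᵐ x ∂(P.map X), gammaMeasure m r (Ioi x) = ENNReal.ofReal (erlangTail m (r * x)) := by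
    filter_upwards [(ae_map_iff hX.aemeasurable measurableSet_Ici).mpr (ae_of_all _ hXnonneg)]
      with x hx using gammaMeasure_Ioi_natCast hm hr hx
  rw [measure_lt_eq_lintegral_map_Ioi hX hY hXY, hYdist, lintegral_congr_ae hsurv,
    lintegral_map hmeas.ennreal_ofReal hX, integral_eq_lintegral_of_nonneg_ae
      (ae_of_all _ fun ω => erlangTail_nonneg m (by have := hXnonneg ω; positivity))
      (hmeas.comp hX).aestronglyMeasurable]

end Independence

theorem stmt17_general {Ω : Type*} [MeasurableSpace Ω] (P : Measure Ω) [IsProbabilityMeasure P]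
    (m : ℕ) (hm : 1 ≤ m)
    (G I : Ω → ℝ) (hGmeas : Measurable G) (hImeas : Measurable I)
    (hG : P.map G = gammaMeasure (m : ℝ) (m : ℝ))
    (hInonneg : ∀ ω, 0 ≤ I ω)
    (hindep : IndepFun G I P)
    (L : ℝ → ℝ)
    (hLderiv : ∀ (k : ℕ) (t : ℝ), 0 < t →
      iteratedDeriv k L t = (-1 : ℝ) ^ k * ∫ ω, I ω ^ k * Real.exp (-(t * I ω)) ∂P)
    (hInt : ∀ (k : ℕ) (t : ℝ), 0 < t →
      Integrable (fun ω => I ω ^ k * Real.exp (-(t * I ω))) P)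
    (c s σ2 : ℝ) (hc : 0 < c) (hs : 0 < s) (hσ : 0 < σ2)
    (t : ℝ) (ht : t = (m : ℝ) * s / c) :
    (P {ω | c * G ω > s * (I ω + σ2)}).toReal
      = ∑ n ∈ Finset.range m, (-t) ^ n / n.factorial * Real.exp (-(t * σ2)) *
          ∑ k ∈ Finset.range (n + 1),
            (n.choose k : ℝ) * (-σ2) ^ (n - k) * iteratedDeriv k L t := by
  have hm0 : (0 : ℝ) < m := by exact_mod_cast hm
  have ht0 : 0 < t := by rw [ht]; positivity
  have hevent : {ω | c * G ω > s * (I ω + σ2)} = {ω | s * (I ω + σ2) / c < G ω} := by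
    ext ω
    simp only [Set.mem_ofPred_eq, gt_iff_lt, div_lt_iff₀ hc, mul_comm c]
  have hscale : ∀ ω, (m : ℝ) * (s * (I ω + σ2) / c) = t * (I ω + σ2) := fun ω => by
    rw [ht]; field_simp
  rw [hevent, toReal_measure_lt_of_map_eq_gammaMeasure (X := fun ω => s * (I ω + σ2) / c)
    (by omega) hm0 (by fun_prop) hGmeas hG (fun ω => by have := hInonneg ω; positivity)
    (hindep.symm.comp (φ := fun i => s * (i + σ2) / c) (by fun_prop) measurable_id)]
  simp_rw [hscale, integral_erlangTail_mul_add m t σ2 (hInt · t ht0), hLderiv _ t ht0]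
  refine sum_congr rfl fun n _ => ?_
  linear_combination (-exp (-(t * σ2)) / n.factorial) * (neg_pow_mul_sum_choose_neg_pow n t σ2
    fun k => ∫ ω, I ω ^ k * exp (-(t * I ω)) ∂P)

/-- For `G ~ Gamma(m, m)` (`m ≥ 1` an integer) independent of `I ≥ 0` with
Laplace transform `L_I` satisfying `L_I^{(k)}(t) = (−1)^k E[I^k e^{−tI}]`, and `c, s, σ² > 0`,
`P(cG > s(I+σ²)) = Σ_{n=0}^{m−1} ((−t)^n/n!) e^{−tσ²} Σ_{k=0}^{n} C(n,k)(−σ²)^{n−k} L_I^{(k)}(t)`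
at `t = ms/c`. -/
theorem stmt17 {Ω : Type*} [MeasurableSpace Ω] (P : Measure Ω) [IsProbabilityMeasure P]
    (m : ℕ) (hm : 1 ≤ m)
    (G I : Ω → ℝ) (hGmeas : Measurable G) (hImeas : Measurable I)
    (hG : P.map G = gammaMeasure (m : ℝ) (m : ℝ))
    (hInonneg : ∀ ω, 0 ≤ I ω)
    (hindep : IndepFun G I P)
    (L : ℝ → ℝ)
    (hL : ∀ t : ℝ, 0 < t → L t = ∫ ω, Real.exp (-(t * I ω)) ∂P)
    (hLderiv : ∀ (k : ℕ) (t : ℝ), 0 < t →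
      iteratedDeriv k L t = (-1 : ℝ) ^ k * ∫ ω, I ω ^ k * Real.exp (-(t * I ω)) ∂P)
    (hInt : ∀ (k : ℕ) (t : ℝ), 0 < t →
      Integrable (fun ω => I ω ^ k * Real.exp (-(t * I ω))) P)
    (c s σ2 : ℝ) (hc : 0 < c) (hs : 0 < s) (hσ : 0 < σ2)
    (t : ℝ) (ht : t = (m : ℝ) * s / c) :
    (P {ω | c * G ω > s * (I ω + σ2)}).toReal
      = ∑ n ∈ Finset.range m, (-t) ^ n / n.factorial * Real.exp (-(t * σ2)) *
          ∑ k ∈ Finset.range (n + 1),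
            (n.choose k : ℝ) * (-σ2) ^ (n - k) * iteratedDeriv k L t :=
  stmt17_general P m hm G I hGmeas hImeas hG hInonneg hindep L hLderiv hInt c s σ2 hc hs hσ t ht
end
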